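/- For all 1 ≤ p, q < ∞ the closed unit balls Ba(ℓ_p) and Ba(ℓ_q) are uniformly homeomorphic: there exists a bijection F : Ba(ℓ_p) → Ba(ℓ_q) such that both F and F^{-1} are uniformly continuous. -/

import Mathlib

/-!
Mazur map: the map `x ↦ (sign xᵢ |xᵢ| ^ (p/q))ᵢ` sends `ℓ^p` to `ℓ^q` with
`‖M x‖_q = ‖x‖_p ^ (p/q)`, so it maps the unit ball onto the unit ball, and its inverse is the
Mazur map for `(q, p)`. It therefore suffices to show that each Mazur map is uniformly continuous
on the unit ball. For `p ≤ q` the scalar map `t ↦ sign t |t| ^ (p/q)` is `(p/q)`-Hölder, which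
gives `‖M x - M y‖_q ^ q ≤ 2 ^ q ‖x - y‖_p ^ p` everywhere. For `p > q` it only satisfies
`|φ t - φ u| ≤ (p/q) max(|t|, |u|) ^ (p/q - 1) |t - u|`, and Hölder's inequality with exponents
`p/(p-q)` and `p/q` turns this into a Lipschitz bound on the unit ball.
-/

open scoped ENNReal Topology

noncomputable section

def signedRpow (a t : ℝ) : ℝ := Real.sign t * |t| ^ a

section signedRpow

variable {a b : ℝ}

lemma signedRpow_of_nonneg (ha : 0 < a) {t : ℝ} (ht : 0 ≤ t) : signedRpow a t = t ^ a := by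
  rcases ht.eq_or_lt with rfl | ht
  · simp [signedRpow, Real.zero_rpow ha.ne']
  · simp [signedRpow, Real.sign_of_pos ht, abs_of_pos ht]

lemma signedRpow_neg (a t : ℝ) : signedRpow a (-t) = -signedRpow a t := by
  simp [signedRpow, Real.sign_neg]

lemma signedRpow_of_nonpos (ha : 0 < a) {t : ℝ} (ht : t ≤ 0) : signedRpow a t = -(-t) ^ a := by
  rw [← signedRpow_of_nonneg ha (neg_nonneg.2 ht), signedRpow_neg, neg_neg]

lemma abs_signedRpow (ha : 0 < a) (t : ℝ) : |signedRpow a t| = |t| ^ a := by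
  rcases le_total 0 t with ht | ht
  · rw [signedRpow_of_nonneg ha ht, abs_of_nonneg ht, abs_of_nonneg (Real.rpow_nonneg ht a)]
  · rw [signedRpow_of_nonpos ha ht, abs_neg, abs_of_nonpos ht,
      abs_of_nonneg (Real.rpow_nonneg (neg_nonneg.2 ht) a)]

lemma signedRpow_signedRpow (ha : 0 < a) (hb : 0 < b) (t : ℝ) :
    signedRpow a (signedRpow b t) = signedRpow (b * a) t := by
  rcases le_total 0 t with ht | ht
  · rw [signedRpow_of_nonneg hb ht, signedRpow_of_nonneg ha (Real.rpow_nonneg ht b),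
      signedRpow_of_nonneg (mul_pos hb ha) ht, Real.rpow_mul ht]
  · rw [signedRpow_of_nonpos hb ht, signedRpow_neg,
      signedRpow_of_nonneg ha (Real.rpow_nonneg (neg_nonneg.2 ht) b),
      signedRpow_of_nonpos (mul_pos hb ha) ht, Real.rpow_mul (neg_nonneg.2 ht)]

lemma signedRpow_one (t : ℝ) : signedRpow 1 t = t := by
  rcases le_total 0 t with ht | ht
  · rw [signedRpow_of_nonneg one_pos ht, Real.rpow_one]
  · rw [signedRpow_of_nonpos one_pos ht, Real.rpow_one, neg_neg]

end signedRpow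

lemma abs_sub_le_of_odd {f : ℝ → ℝ} {B : ℝ → ℝ → ℝ} (hf : ∀ t, f (-t) = -f t)
    (hB_comm : ∀ t u, B t u = B u t) (hB_neg : ∀ t u, B (-t) (-u) = B t u)
    (h_nonneg : ∀ t u, 0 ≤ u → u ≤ t → |f t - f u| ≤ B t u)
    (h_mixed : ∀ t u, u ≤ 0 → 0 ≤ t → |f t - f u| ≤ B t u) (t u : ℝ) :
    |f t - f u| ≤ B t u := by
  wlog hut : u ≤ t generalizing t u
  · rw [abs_sub_comm, hB_comm]
    exact this u t (le_of_not_ge hut)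
  rcases le_total 0 u with hu | hu
  · exact h_nonneg t u hu hut
  rcases le_total 0 t with ht | ht
  · exact h_mixed t u hu ht
  have := h_nonneg (-u) (-t) (neg_nonneg.2 ht) (neg_le_neg hut)
  rwa [hf, hf, hB_neg, hB_comm, sub_neg_eq_add, neg_add_eq_sub] at this

lemma abs_signedRpow_sub_le_of_le_one {a : ℝ} (ha : 0 < a) (ha1 : a ≤ 1) (t u : ℝ) :
    |signedRpow a t - signedRpow a u| ≤ 2 * |t - u| ^ a := by
  refine abs_sub_le_of_odd (B := fun t u ↦ 2 * |t - u| ^ a) (signedRpow_neg a)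
    (fun t u ↦ by rw [abs_sub_comm]) (fun t u ↦ by rw [← neg_sub', abs_neg])
    (fun t u hu hut ↦ ?_) (fun t u hu ht ↦ ?_) t u
  · have hsub : t ^ a ≤ (t - u) ^ a + u ^ a := by
      simpa using Real.rpow_add_le_add_rpow (sub_nonneg.2 hut) hu ha.le ha1
    rw [signedRpow_of_nonneg ha (hu.trans hut), signedRpow_of_nonneg ha hu,
      abs_of_nonneg (sub_nonneg.2 (Real.rpow_le_rpow hu hut ha.le)),
      abs_of_nonneg (sub_nonneg.2 hut)]
    linarith [Real.rpow_nonneg (sub_nonneg.2 hut) a]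
  · have hv := neg_nonneg.2 hu
    rw [signedRpow_of_nonneg ha ht, signedRpow_of_nonpos ha hu, sub_neg_eq_add,
      abs_of_nonneg (add_nonneg (Real.rpow_nonneg ht a) (Real.rpow_nonneg hv a)),
      abs_of_nonneg (by linarith)]
    linarith [Real.rpow_le_rpow ht (by linarith : t ≤ t - u) ha.le,
      Real.rpow_le_rpow hv (by linarith : -u ≤ t - u) ha.le]

lemma rpow_eq_rpow_sub_one_mul {a x : ℝ} (hx : 0 ≤ x) (ha : a ≠ 0) : x ^ a = x ^ (a - 1) * x := by
  rw [← Real.rpow_add_one' hx (by rwa [sub_add_cancel]), sub_add_cancel]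

lemma rpow_sub_rpow_le_mul {a t u : ℝ} (ha : 1 ≤ a) (hu : 0 ≤ u) (hut : u ≤ t) :
    t ^ a - u ^ a ≤ a * t ^ (a - 1) * (t - u) := by
  rcases (hu.trans hut).eq_or_lt with rfl | ht
  · obtain rfl : u = 0 := le_antisymm hut hu
    simp
  -- Bernoulli's inequality for `(u / t) ^ a`, multiplied by `t ^ a = t ^ (a - 1) * t`.
  have bernoulli := one_add_mul_self_le_rpow_one_add (by linarith [div_nonneg hu ht.le] :
    -1 ≤ u / t - 1) ha
  rw [add_sub_cancel, Real.div_rpow hu ht.le, le_div_iff₀ (Real.rpow_pos_of_pos ht a),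
    rpow_eq_rpow_sub_one_mul ht.le (by positivity)] at bernoulli
  have : (1 + a * (u / t - 1)) * (t ^ (a - 1) * t) =
      t ^ (a - 1) * t + a * t ^ (a - 1) * (u - t) := by
    field_simp
  rw [rpow_eq_rpow_sub_one_mul ht.le (by positivity)]
  linarith

lemma abs_signedRpow_sub_le_of_one_le {a : ℝ} (ha : 1 ≤ a) (t u : ℝ) :
    |signedRpow a t - signedRpow a u| ≤ a * max |t| |u| ^ (a - 1) * |t - u| := by
  have ha0 : 0 < a := zero_lt_one.trans_le ha
  refine abs_sub_le_of_odd (B := fun t u ↦ a * max |t| |u| ^ (a - 1) * |t - u|)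
    (signedRpow_neg a) (fun t u ↦ by rw [max_comm, abs_sub_comm])
    (fun t u ↦ by rw [abs_neg, abs_neg, ← neg_sub', abs_neg]) (fun t u hu hut ↦ ?_)
    (fun t u hu ht ↦ ?_) t u
  · rw [signedRpow_of_nonneg ha0 (hu.trans hut), signedRpow_of_nonneg ha0 hu,
      abs_of_nonneg (sub_nonneg.2 (Real.rpow_le_rpow hu hut ha0.le)),
      abs_of_nonneg (sub_nonneg.2 hut), abs_of_nonneg hu, abs_of_nonneg (hu.trans hut),
      max_eq_left hut]
    exact rpow_sub_rpow_le_mul ha hu hut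
  · have hv := neg_nonneg.2 hu
    rw [signedRpow_of_nonneg ha0 ht, signedRpow_of_nonpos ha0 hu, sub_neg_eq_add,
      abs_of_nonneg (add_nonneg (Real.rpow_nonneg ht a) (Real.rpow_nonneg hv a)),
      abs_of_nonneg (by linarith : 0 ≤ t - u), abs_of_nonneg ht, abs_of_nonpos hu]
    set m := max t (-u)
    have hle : ∀ x, 0 ≤ x → x ≤ m → x ^ a ≤ m ^ (a - 1) * x := fun x hx hxm ↦ by
      rw [rpow_eq_rpow_sub_one_mul hx ha0.ne']
      gcongr
    have hm : 0 ≤ (a - 1) * m ^ (a - 1) * (t - u) :=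
      mul_nonneg (mul_nonneg (sub_nonneg.2 ha)
        (Real.rpow_nonneg (ht.trans (le_max_left _ _)) _)) (by linarith)
    linarith [hle t ht (le_max_left _ _), hle (-u) hv (le_max_right _ _)]

lemma summable_and_tsum_rpow_mul_rpow_le {ι : Type*} {f g : ι → ℝ} {r s : ℝ} (hs : 0 < s)
    (hsr : s < r) (hf : ∀ i, 0 ≤ f i) (hg : ∀ i, 0 ≤ g i) (hf_sum : Summable fun i ↦ f i ^ r)
    (hg_sum : Summable fun i ↦ g i ^ r) :
    (Summable fun i ↦ f i ^ (r - s) * g i ^ s) ∧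
      ∑' i, f i ^ (r - s) * g i ^ s ≤
        (∑' i, f i ^ r) ^ (1 - s / r) * (∑' i, g i ^ r) ^ (s / r) := by
  have hr : 0 < r := hs.trans hsr
  have hrs : 0 < r - s := sub_pos.2 hsr
  have hconj : (r / (r - s)).HolderConjugate (r / s) := by
    refine Real.holderConjugate_iff.2 ⟨(one_lt_div hrs).2 (by linarith), ?_⟩
    rw [inv_div, inv_div]
    field_simp
    ring
  have hpow : ∀ {x e : ℝ}, 0 ≤ x → e ≠ 0 → (x ^ e) ^ (r / e) = x ^ r := fun hx he ↦ by
    rw [← Real.rpow_mul hx, mul_div_cancel₀ _ he]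
  have := Real.summable_and_inner_le_Lp_mul_Lq_tsum_of_nonneg hconj
    (fun i ↦ Real.rpow_nonneg (hf i) (r - s)) (fun i ↦ Real.rpow_nonneg (hg i) s)
    (by simpa only [hpow (hf _) hrs.ne'] using hf_sum)
    (by simpa only [hpow (hg _) hs.ne'] using hg_sum)
  simpa only [hpow (hf _) hrs.ne', hpow (hg _) hs.ne', one_div_div, sub_div, div_self hr.ne']
    using this

lemma tsum_abs_signedRpow_sub_rpow_le {ι : Type*} {x y : ι → ℝ} {r s : ℝ} (hs : 0 < s)
    (hsr : s < r) (hx : Summable fun i ↦ |x i| ^ r) (hy : Summable fun i ↦ |y i| ^ r)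
    (hxy : Summable fun i ↦ |x i - y i| ^ r) (hx1 : ∑' i, |x i| ^ r ≤ 1)
    (hy1 : ∑' i, |y i| ^ r ≤ 1) :
    ∑' i, |signedRpow (r / s) (x i) - signedRpow (r / s) (y i)| ^ s ≤
      2 * (r / s) ^ s * (∑' i, |x i - y i| ^ r) ^ (s / r) := by
  have hr : 0 < r := hs.trans hsr
  set m : ι → ℝ := fun i ↦ max |x i| |y i|
  have hm : ∀ i, 0 ≤ m i := fun i ↦ le_max_of_le_left (abs_nonneg _)
  have hm_rpow : ∀ i, m i ^ r ≤ |x i| ^ r + |y i| ^ r := fun i ↦ by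
    rcases le_total |x i| |y i| with h | h
    · simp only [m, max_eq_right h, le_add_iff_nonneg_left, Real.rpow_nonneg (abs_nonneg _)]
    · simp only [m, max_eq_left h, le_add_iff_nonneg_right, Real.rpow_nonneg (abs_nonneg _)]
  have hm_sum : Summable fun i ↦ m i ^ r :=
    .of_nonneg_of_le (fun i ↦ Real.rpow_nonneg (hm i) r) hm_rpow (hx.add hy)
  have hm_tsum : ∑' i, m i ^ r ≤ 2 := by
    calc ∑' i, m i ^ r ≤ ∑' i, (|x i| ^ r + |y i| ^ r) := hm_sum.tsum_le_tsum hm_rpow (hx.add hy)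
      _ ≤ 2 := by linarith [hx.tsum_add hy]
  have hpt : ∀ i, |signedRpow (r / s) (x i) - signedRpow (r / s) (y i)| ^ s ≤
      (r / s) ^ s * (m i ^ (r - s) * |x i - y i| ^ s) := fun i ↦ by
    have h := abs_signedRpow_sub_le_of_one_le ((one_le_div hs).2 hsr.le) (x i) (y i)
    calc |signedRpow (r / s) (x i) - signedRpow (r / s) (y i)| ^ s
        ≤ (r / s * m i ^ (r / s - 1) * |x i - y i|) ^ s := by gcongr
      _ = (r / s) ^ s * (m i ^ (r - s) * |x i - y i| ^ s) := by
        rw [Real.mul_rpow (by positivity) (abs_nonneg _),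
          Real.mul_rpow (by positivity) (Real.rpow_nonneg (hm i) _), ← Real.rpow_mul (hm i),
          sub_mul, div_mul_cancel₀ _ hs.ne', one_mul, mul_assoc]
  obtain ⟨hsum, hholder⟩ :=
    summable_and_tsum_rpow_mul_rpow_le hs hsr hm (fun i ↦ abs_nonneg _) hm_sum hxy
  have hm_pow : (∑' i, m i ^ r) ^ (1 - s / r) ≤ 2 := by
    calc (∑' i, m i ^ r) ^ (1 - s / r) ≤ 2 ^ (1 - s / r) := by
          gcongr
          linarith [(div_lt_one hr).2 hsr]
      _ ≤ 2 ^ (1 : ℝ) := Real.rpow_le_rpow_of_exponent_le one_le_two (by linarith [div_pos hs hr])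
      _ = 2 := Real.rpow_one 2
  calc ∑' i, |signedRpow (r / s) (x i) - signedRpow (r / s) (y i)| ^ s
      ≤ ∑' i, (r / s) ^ s * (m i ^ (r - s) * |x i - y i| ^ s) :=
        Summable.tsum_le_tsum hpt
          (.of_nonneg_of_le (fun i ↦ Real.rpow_nonneg (abs_nonneg _) s) hpt (hsum.mul_left _))
          (hsum.mul_left _)
    _ ≤ (r / s) ^ s * ((∑' i, m i ^ r) ^ (1 - s / r) * (∑' i, |x i - y i| ^ r) ^ (s / r)) := by
        rw [tsum_mul_left]
        gcongr
    _ ≤ 2 * (r / s) ^ s * (∑' i, |x i - y i| ^ r) ^ (s / r) := by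
        rw [mul_left_comm, ← mul_assoc]
        gcongr

section lp

variable {ι : Type*} {p q : ℝ≥0∞}

lemma lp.summable_abs_rpow (hp : 0 < p.toReal) (x : lp (fun _ : ι ↦ ℝ) p) :
    Summable fun i ↦ |x i| ^ p.toReal := by
  simpa only [Real.norm_eq_abs] using (lp.memℓp x).summable hp

lemma lp.norm_rpow_eq_tsum_abs (hp : 0 < p.toReal) (x : lp (fun _ : ι ↦ ℝ) p) :
    ‖x‖ ^ p.toReal = ∑' i, |x i| ^ p.toReal := by
  simp only [lp.norm_rpow_eq_tsum hp, Real.norm_eq_abs]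

lemma abs_signedRpow_div_rpow {r s : ℝ} (hr : 0 < r) (hs : 0 < s) (t : ℝ) :
    |signedRpow (r / s) t| ^ s = |t| ^ r := by
  rw [abs_signedRpow (div_pos hr hs), ← Real.rpow_mul (abs_nonneg t), div_mul_cancel₀ _ hs.ne']

lemma memℓp_signedRpow (hp : 0 < p.toReal) (hq : 0 < q.toReal) (x : lp (fun _ : ι ↦ ℝ) p) :
    Memℓp (fun i ↦ signedRpow (p.toReal / q.toReal) (x i)) q :=
  memℓp_gen <| by
    simpa only [Real.norm_eq_abs, abs_signedRpow_div_rpow hp hq] using lp.summable_abs_rpow hp x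

def mazurMap (hp : 0 < p.toReal) (hq : 0 < q.toReal) (x : lp (fun _ : ι ↦ ℝ) p) :
    lp (fun _ : ι ↦ ℝ) q :=
  ⟨fun i ↦ signedRpow (p.toReal / q.toReal) (x i), memℓp_signedRpow hp hq x⟩

variable (hp : 0 < p.toReal) (hq : 0 < q.toReal)

lemma mazurMap_apply (x : lp (fun _ : ι ↦ ℝ) p) (i : ι) :
    mazurMap hp hq x i = signedRpow (p.toReal / q.toReal) (x i) :=
  rfl

lemma mazurMap_mazurMap (x : lp (fun _ : ι ↦ ℝ) p) : mazurMap hq hp (mazurMap hp hq x) = x := by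
  ext i
  rw [mazurMap_apply, mazurMap_apply, signedRpow_signedRpow (div_pos hq hp) (div_pos hp hq),
    div_mul_div_cancel₀ hq.ne', div_self hp.ne', signedRpow_one]

lemma norm_mazurMap (x : lp (fun _ : ι ↦ ℝ) p) :
    ‖mazurMap hp hq x‖ = ‖x‖ ^ (p.toReal / q.toReal) := by
  rw [lp.norm_eq_tsum_rpow hq]
  simp only [mazurMap_apply, Real.norm_eq_abs, abs_signedRpow_div_rpow hp hq]
  rw [← lp.norm_rpow_eq_tsum_abs hp, ← Real.rpow_mul (lp.norm_nonneg' x), mul_one_div]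

lemma norm_mazurMap_sub_rpow_le_of_le (hpq : p.toReal ≤ q.toReal)
    (x y : lp (fun _ : ι ↦ ℝ) p) :
    ‖mazurMap hp hq x - mazurMap hp hq y‖ ^ q.toReal ≤ 2 ^ q.toReal * ‖x - y‖ ^ p.toReal := by
  rw [lp.norm_rpow_eq_tsum_abs hq, lp.norm_rpow_eq_tsum_abs hp, ← tsum_mul_left]
  refine (lp.summable_abs_rpow hq _).tsum_le_tsum (fun i ↦ ?_)
    ((lp.summable_abs_rpow hp _).mul_left _)
  calc |(mazurMap hp hq x - mazurMap hp hq y) i| ^ q.toReal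
      ≤ (2 * |x i - y i| ^ (p.toReal / q.toReal)) ^ q.toReal := by
        gcongr
        exact abs_signedRpow_sub_le_of_le_one (div_pos hp hq) ((div_le_one hq).2 hpq) _ _
    _ = 2 ^ q.toReal * |(x - y) i| ^ p.toReal := by
        rw [Real.mul_rpow zero_le_two (by positivity), ← Real.rpow_mul (abs_nonneg _),
          div_mul_cancel₀ _ hq.ne', lp.coeFn_sub, Pi.sub_apply]

lemma norm_mazurMap_sub_rpow_le_of_lt (hqp : q.toReal < p.toReal) {x y : lp (fun _ : ι ↦ ℝ) p}
    (hx : ‖x‖ ≤ 1) (hy : ‖y‖ ≤ 1) :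
    ‖mazurMap hp hq x - mazurMap hp hq y‖ ^ q.toReal ≤
      2 * (p.toReal / q.toReal) ^ q.toReal * ‖x - y‖ ^ q.toReal := by
  have hle_one : ∀ z : lp (fun _ : ι ↦ ℝ) p, ‖z‖ ≤ 1 → ∑' i, |z i| ^ p.toReal ≤ 1 :=
    fun z hz ↦ by
      rw [← lp.norm_rpow_eq_tsum_abs hp]
      exact Real.rpow_le_one (lp.norm_nonneg' z) hz hp.le
  have hxy : ‖x - y‖ ^ q.toReal = (∑' i, |x i - y i| ^ p.toReal) ^ (q.toReal / p.toReal) := by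
    simp only [← Pi.sub_apply, ← lp.coeFn_sub]
    rw [← lp.norm_rpow_eq_tsum_abs hp, ← Real.rpow_mul (lp.norm_nonneg' _),
      mul_div_cancel₀ _ hp.ne']
  have hxy_sum : Summable fun i ↦ |x i - y i| ^ p.toReal := by
    simpa only [lp.coeFn_sub, Pi.sub_apply] using lp.summable_abs_rpow hp (x - y)
  rw [lp.norm_rpow_eq_tsum_abs hq, hxy]
  exact tsum_abs_signedRpow_sub_rpow_le hq hqp (lp.summable_abs_rpow hp x)
    (lp.summable_abs_rpow hp y) hxy_sum (hle_one x hx) (hle_one y hy)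

end lp

lemma uniformContinuousOn_of_dist_rpow_le {X Y : Type*} [PseudoMetricSpace X]
    [PseudoMetricSpace Y] {f : X → Y} {s : Set X} {C α β : ℝ} (hα : 0 < α) (hβ : 0 < β)
    (h : ∀ x ∈ s, ∀ y ∈ s, dist (f x) (f y) ^ α ≤ C * dist x y ^ β) :
    UniformContinuousOn f s := by
  rw [Metric.uniformContinuousOn_iff]
  intro ε hε
  have hlim : Filter.Tendsto (fun t : ℝ ↦ C * t ^ β) (𝓝 0) (𝓝 0) := by
    simpa [Real.zero_rpow hβ.ne'] using
      ((Real.continuousAt_rpow_const 0 β (Or.inr hβ.le)).const_mul C).tendsto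
  obtain ⟨δ, hδ, hsmall⟩ := Metric.eventually_nhds_iff.1 <|
    hlim.eventually (gt_mem_nhds (Real.rpow_pos_of_pos hε α))
  refine ⟨δ, hδ, fun x hx y hy hxy ↦ ?_⟩
  have := (h x hx y hy).trans_lt (hsmall (by rwa [Real.dist_0_eq_abs, abs_dist]))
  exact (Real.rpow_lt_rpow_iff dist_nonneg hε.le hα).1 this

section ball

variable {ι : Type*} {p q : ℝ≥0∞} [Fact (1 ≤ p)] [Fact (1 ≤ q)]
  (hp : 0 < p.toReal) (hq : 0 < q.toReal)

lemma mapsTo_mazurMap_closedBall :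
    Set.MapsTo (mazurMap (ι := ι) hp hq) (Metric.closedBall 0 1) (Metric.closedBall 0 1) :=
  fun x hx ↦ by
    rw [mem_closedBall_zero_iff] at hx ⊢
    rw [norm_mazurMap hp hq]
    exact Real.rpow_le_one (norm_nonneg x) hx (div_pos hp hq).le

lemma uniformContinuousOn_mazurMap_closedBall :
    UniformContinuousOn (mazurMap (ι := ι) hp hq) (Metric.closedBall 0 1) := by
  rcases le_or_gt p.toReal q.toReal with hpq | hqp
  · exact uniformContinuousOn_of_dist_rpow_le hq hp fun x _ y _ ↦ by
      simpa only [dist_eq_norm] using norm_mazurMap_sub_rpow_le_of_le hp hq hpq x y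
  · exact uniformContinuousOn_of_dist_rpow_le hq hq fun x hx y hy ↦ by
      simpa only [dist_eq_norm] using norm_mazurMap_sub_rpow_le_of_lt hp hq hqp
        (mem_closedBall_zero_iff.1 hx) (mem_closedBall_zero_iff.1 hy)

end ball

theorem lp_balls_uniformly_homeomorphic_general (p q : ℝ≥0∞)
    (hp' : p ≠ ⊤) (hq' : q ≠ ⊤)
    [Fact (1 ≤ p)] [Fact (1 ≤ q)] :
    ∃ (F : Metric.closedBall (0 : lp (fun _ : ℕ => ℝ) p) 1 →
          Metric.closedBall (0 : lp (fun _ : ℕ => ℝ) q) 1)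
      (G : Metric.closedBall (0 : lp (fun _ : ℕ => ℝ) q) 1 →
          Metric.closedBall (0 : lp (fun _ : ℕ => ℝ) p) 1),
      Function.LeftInverse G F ∧ Function.RightInverse G F ∧
      UniformContinuous F ∧ UniformContinuous G := by
  have hp : 0 < p.toReal := ENNReal.toReal_pos (one_pos.trans_le Fact.out).ne' hp'
  have hq : 0 < q.toReal := ENNReal.toReal_pos (one_pos.trans_le Fact.out).ne' hq'
  exact ⟨(mapsTo_mazurMap_closedBall hp hq).restrict, (mapsTo_mazurMap_closedBall hq hp).restrict,
    fun x ↦ Subtype.ext (mazurMap_mazurMap hp hq x.1),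
    fun y ↦ Subtype.ext (mazurMap_mazurMap hq hp y.1),
    (uniformContinuousOn_mazurMap_closedBall hp hq).restrict.subtype_mk _,
    (uniformContinuousOn_mazurMap_closedBall hq hp).restrict.subtype_mk _⟩

/-- For all `1 ≤ p, q < ∞` the closed unit balls of `ℓ_p` and `ℓ_q` are
uniformly homeomorphic. -/
theorem lp_balls_uniformly_homeomorphic (p q : ℝ≥0∞)
    (hp : 1 ≤ p) (hp' : p ≠ ⊤) (hq : 1 ≤ q) (hq' : q ≠ ⊤)
    [Fact (1 ≤ p)] [Fact (1 ≤ q)] :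
    ∃ (F : Metric.closedBall (0 : lp (fun _ : ℕ => ℝ) p) 1 →
          Metric.closedBall (0 : lp (fun _ : ℕ => ℝ) q) 1)
      (G : Metric.closedBall (0 : lp (fun _ : ℕ => ℝ) q) 1 →
          Metric.closedBall (0 : lp (fun _ : ℕ => ℝ) p) 1),
      Function.LeftInverse G F ∧ Function.RightInverse G F ∧
      UniformContinuous F ∧ UniformContinuous G :=
  lp_balls_uniformly_homeomorphic_general p q hp' hq'
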